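/- arXiv:0903.2675 — 2 statements merged into one kernel-verified Lean document; each statement's English description precedes it below -/
import Mathlib

section
/- For r ≤ ⌊n/2⌋ and 0 ≤ t ≤ r, the volume V_C(t) = ∑_{d=0}^{t} q^{d²}·[r choose d]_q·[n-r choose d]_q of a ball of radius t in the Grassmannian E_r(q,n) satisfies q^{t(n-t)} ≤ V_C(t) < K_q^{-2}·q^{t(n-t)}, where K_q = ∏_{j=1}^∞(1-q^{-j}). -/
/-- The Gaussian binomial coefficient `[n choose r]_q`. -/
noncomputable def gaussBinom (q n r : ℕ) : ℝ :=
  ∏ i ∈ Finset.range r, (((q : ℝ) ^ n - (q : ℝ) ^ i) / ((q : ℝ) ^ r - (q : ℝ) ^ i))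

/-- Volume of a ball of injection-radius `t` in the Grassmannian `E_r(q,n)`. -/
noncomputable def ballVol (q n r t : ℕ) : ℝ :=
  ∑ d ∈ Finset.range (t + 1),
    (q : ℝ) ^ (d ^ 2) * gaussBinom q r d * gaussBinom q (n - r) d

/-- `K_q = ∏_{j=1}^∞ (1 - q^{-j})`. -/
noncomputable def Kq (q : ℕ) : ℝ := ∏' j : ℕ, (1 - ((q : ℝ))⁻¹ ^ (j + 1))

/-!
With `x = q⁻¹`, every Gaussian binomial factors as
`[m choose t]_q = q^{t(m-t)} ∏_{i<t} (1 - x^{m-i}) / ∏_{j=1}^{t} (1 - x^j)`.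
Hence `q^{t(m-t)} ≤ [m choose t]_q`, which bounds the top term of the ball volume from below.
Conversely, the partial Euler products `∏_{j=1}^{t} (1 - x^j)` all dominate `K_q`, and keeping the
factor `1 - x^{n-r-d+1}` of `[n-r choose d]_q` bounds the `d`-th term of the volume by
`K_q^{-2} (q^{d(n-d)} - q^{(d-1)(n-d+1)})`, so the volume telescopes to at most
`1 + K_q^{-2} (q^{t(n-t)} - 1) < K_q^{-2} q^{t(n-t)}`.
-/

open Finset

noncomputable def eulerPartialProd (x : ℝ) (t : ℕ) : ℝ := ∏ j ∈ range t, (1 - x ^ (j + 1))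

section EulerProduct

variable {x : ℝ}

lemma one_sub_pow_pos (hx0 : 0 ≤ x) (hx1 : x < 1) {k : ℕ} (hk : k ≠ 0) : 0 < 1 - x ^ k :=
  sub_pos.2 (pow_lt_one₀ hx0 hx1 hk)

lemma eulerPartialProd_pos (hx0 : 0 ≤ x) (hx1 : x < 1) (t : ℕ) : 0 < eulerPartialProd x t :=
  prod_pos fun j _ => one_sub_pow_pos hx0 hx1 j.succ_ne_zero

lemma summable_log_one_sub_pow_succ (hx0 : 0 ≤ x) (hx1 : x < 1) :
    Summable fun j : ℕ => Real.log (1 - x ^ (j + 1)) := by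
  have h : Summable fun j : ℕ => -x ^ (j + 1) := by
    simpa only [pow_succ] using ((summable_geometric_of_lt_one hx0 hx1).mul_right x).neg
  simpa only [sub_eq_add_neg] using Real.summable_log_one_add_of_summable h

lemma tprod_one_sub_pow_succ_pos (hx0 : 0 ≤ x) (hx1 : x < 1) :
    0 < ∏' j : ℕ, (1 - x ^ (j + 1)) := by
  rw [← Real.rexp_tsum_eq_tprod (fun j => one_sub_pow_pos hx0 hx1 j.succ_ne_zero)
    (summable_log_one_sub_pow_succ hx0 hx1)]
  exact Real.exp_pos _

lemma tprod_one_sub_pow_succ_le_eulerPartialProd (hx0 : 0 ≤ x) (hx1 : x < 1) (t : ℕ) :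
    ∏' j : ℕ, (1 - x ^ (j + 1)) ≤ eulerPartialProd x t := by
  have hpos (j : ℕ) : 0 < 1 - x ^ (j + 1) := one_sub_pow_pos hx0 hx1 j.succ_ne_zero
  refine le_of_tendsto
    (Real.multipliable_of_summable_log hpos (summable_log_one_sub_pow_succ hx0 hx1)).hasProd ?_
  filter_upwards [Filter.eventually_ge_atTop (range t)] with s hs
  rw [← prod_sdiff hs]
  exact mul_le_of_le_one_left (eulerPartialProd_pos hx0 hx1 t).le
    (prod_le_one (fun j _ => (hpos j).le) fun j _ => sub_le_self _ (pow_nonneg hx0 _))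

lemma tprod_one_sub_pow_succ_lt_one (hx0 : 0 < x) (hx1 : x < 1) :
    ∏' j : ℕ, (1 - x ^ (j + 1)) < 1 := by
  refine (tprod_one_sub_pow_succ_le_eulerPartialProd hx0.le hx1 1).trans_lt ?_
  simpa [eulerPartialProd] using hx0

end EulerProduct

section GaussBinom

variable {q : ℕ}

lemma gaussBinom_factor_eq (hq : 1 < q) {m t i : ℕ} (hit : i < t) (htm : t ≤ m) :
    ((q : ℝ) ^ m - (q : ℝ) ^ i) / ((q : ℝ) ^ t - (q : ℝ) ^ i)
      = (q : ℝ) ^ (m - t) * (1 - (q : ℝ)⁻¹ ^ (m - i)) / (1 - (q : ℝ)⁻¹ ^ (t - i)) := by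
  obtain ⟨k, rfl⟩ := Nat.exists_eq_add_of_le htm
  obtain ⟨j, rfl⟩ := Nat.exists_eq_add_of_lt hit
  have hq' : (1 : ℝ) < q := by exact_mod_cast hq
  have hj : (1 : ℝ) < (q : ℝ) ^ (j + 1) := one_lt_pow₀ hq' j.succ_ne_zero
  have hqi : (0 : ℝ) < (q : ℝ) ^ i := by positivity
  simp only [Nat.add_sub_cancel_left, show i + j + 1 + k - i = j + 1 + k by omega,
    show i + j + 1 - i = j + 1 by omega, inv_pow, pow_add]
  field_simp

lemma prod_one_sub_pow_sub_eq_eulerPartialProd (x : ℝ) (t : ℕ) :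
    ∏ i ∈ range t, (1 - x ^ (t - i)) = eulerPartialProd x t := by
  rw [eulerPartialProd, ← prod_range_reflect]
  refine prod_congr rfl fun i hi => ?_
  rw [show t - (t - 1 - i) = i + 1 by have := mem_range.1 hi; omega]

lemma gaussBinom_eq (hq : 1 < q) {m t : ℕ} (htm : t ≤ m) :
    gaussBinom q m t = (q : ℝ) ^ (t * (m - t)) * (∏ i ∈ range t, (1 - (q : ℝ)⁻¹ ^ (m - i))) /
      eulerPartialProd (q : ℝ)⁻¹ t := by
  rw [gaussBinom, prod_congr rfl fun i hi => gaussBinom_factor_eq hq (mem_range.1 hi) htm]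
  simp only [mul_div_assoc]
  rw [prod_mul_distrib, prod_const, card_range, prod_div_distrib,
    prod_one_sub_pow_sub_eq_eulerPartialProd, ← pow_mul, Nat.mul_comm]

lemma pow_le_gaussBinom (hq : 1 < q) {m t : ℕ} (htm : t ≤ m) :
    (q : ℝ) ^ (t * (m - t)) ≤ gaussBinom q m t := by
  have hq' : (1 : ℝ) < q := by exact_mod_cast hq
  calc (q : ℝ) ^ (t * (m - t)) = ∏ _i ∈ range t, (q : ℝ) ^ (m - t) := by
        rw [prod_const, card_range, ← pow_mul, Nat.mul_comm]
    _ ≤ gaussBinom q m t := prod_le_prod (fun _ _ => by positivity) fun i hi => ?_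
  have hit := mem_range.1 hi
  rw [le_div_iff₀ (sub_pos.2 (pow_lt_pow_right₀ hq' hit)), mul_sub, ← pow_add,
    Nat.sub_add_cancel htm, sub_le_sub_iff_left]
  exact le_mul_of_one_le_left (by positivity) (one_le_pow₀ hq'.le)

lemma gaussBinom_nonneg (hq : 1 < q) {m t : ℕ} (htm : t ≤ m) : 0 ≤ gaussBinom q m t :=
  (pow_nonneg (Nat.cast_nonneg q) _).trans (pow_le_gaussBinom hq htm)

lemma gaussBinom_le (hq : 1 < q) {m t : ℕ} (ht : 0 < t) (htm : t ≤ m) :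
    gaussBinom q m t ≤
      (q : ℝ) ^ (t * (m - t)) * (1 - (q : ℝ)⁻¹ ^ (m - t + 1)) / eulerPartialProd (q : ℝ)⁻¹ t := by
  have hx0 : (0 : ℝ) ≤ (q : ℝ)⁻¹ := by positivity
  have hx1 : (q : ℝ)⁻¹ ≤ 1 := inv_le_one_of_one_le₀ (by exact_mod_cast hq.le)
  have hfac (k : ℕ) : 0 ≤ 1 - (q : ℝ)⁻¹ ^ k := sub_nonneg.2 (pow_le_one₀ hx0 hx1)
  obtain ⟨u, rfl⟩ := Nat.exists_eq_add_of_lt ht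
  rw [gaussBinom_eq hq htm, zero_add, prod_range_succ, show m - u = m - (u + 1) + 1 by omega]
  gcongr
  · exact (eulerPartialProd_pos hx0 (inv_lt_one_of_one_lt₀ (by exact_mod_cast hq)) _).le
  · exact mul_le_of_le_one_left (hfac _)
      (prod_le_one (fun _ _ => hfac _) fun _ _ => sub_le_self _ (pow_nonneg hx0 _))

end GaussBinom

section BallVolume

lemma sq_add_mul_sub_add_mul_sub_eq {n r s : ℕ} (hsr : s ≤ r) (hrn : r + s ≤ n) :
    s ^ 2 + s * (r - s) + s * (n - r - s) = s * (n - s) := by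
  zify [hsr, (by omega : s ≤ n - r), (by omega : r ≤ n), (by omega : s ≤ n)]
  ring

variable {q : ℕ}

lemma ballVol_term_le (hq : 1 < q) {r n d : ℕ} (hdr : d + 1 ≤ r) (hrn : r + (d + 1) ≤ n) :
    (q : ℝ) ^ ((d + 1) ^ 2) * gaussBinom q r (d + 1) * gaussBinom q (n - r) (d + 1) ≤
      (Kq q ^ 2)⁻¹ * ((q : ℝ) ^ ((d + 1) * (n - (d + 1))) - (q : ℝ) ^ (d * (n - d))) := by
  have hdn : d + 1 ≤ n - r := by omega
  set s := d + 1 with hs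
  set x := (q : ℝ)⁻¹ with hx
  have hx0 : 0 ≤ x := by positivity
  have hx1 : x < 1 := inv_lt_one_of_one_lt₀ (by exact_mod_cast hq)
  have hK : 0 < Kq q := tprod_one_sub_pow_succ_pos hx0 hx1
  have hKP : Kq q ≤ eulerPartialProd x s := tprod_one_sub_pow_succ_le_eulerPartialProd hx0 hx1 s
  have hP : 0 < eulerPartialProd x s := eulerPartialProd_pos hx0 hx1 s
  have hfac (k : ℕ) : 0 ≤ 1 - x ^ k := sub_nonneg.2 (pow_le_one₀ hx0 hx1.le)
  have hsplit : (q : ℝ) ^ (s * (n - s)) =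
      (q : ℝ) ^ (s ^ 2) * (q : ℝ) ^ (s * (r - s)) * (q : ℝ) ^ (s * (n - r - s)) := by
    rw [← pow_add, ← pow_add, sq_add_mul_sub_add_mul_sub_eq hdr hrn]
  have hshift : (q : ℝ) ^ (d * (n - d)) = (q : ℝ) ^ (s * (n - s)) * x ^ (n - 2 * s + 1) := by
    have hq0 : (q : ℝ) ^ (n - 2 * s + 1) ≠ 0 := by positivity
    rw [hx, inv_pow, eq_mul_inv_iff_mul_eq₀ hq0, ← pow_add]
    congr 1
    zify [(by omega : d ≤ n), (by omega : s ≤ n), (by omega : 2 * s ≤ n)]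
    push_cast [hs]
    ring
  calc _ ≤ (q : ℝ) ^ (s ^ 2) *
          ((q : ℝ) ^ (s * (r - s)) * (1 - x ^ (r - s + 1)) / eulerPartialProd x s) *
          ((q : ℝ) ^ (s * (n - r - s)) * (1 - x ^ (n - r - s + 1)) / eulerPartialProd x s) := by
        gcongr
        · exact gaussBinom_nonneg hq hdn
        · exact mul_nonneg (by positivity) (div_nonneg (mul_nonneg (by positivity) (hfac _)) hP.le)
        · exact gaussBinom_le hq d.succ_pos hdr
        · exact gaussBinom_le hq d.succ_pos hdn
    _ = (q : ℝ) ^ (s * (n - s)) * ((1 - x ^ (r - s + 1)) * (1 - x ^ (n - r - s + 1))) /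
          eulerPartialProd x s ^ 2 := by
        rw [hsplit]; ring
    _ ≤ (q : ℝ) ^ (s * (n - s)) * (1 - x ^ (n - 2 * s + 1)) / Kq q ^ 2 := by
        gcongr
        · exact mul_nonneg (by positivity) (hfac _)
        · exact (mul_le_of_le_one_left (hfac _) (sub_le_self _ (pow_nonneg hx0 _))).trans
            (sub_le_sub_left (pow_le_pow_of_le_one hx0 hx1.le (by omega)) 1)
    _ = _ := by rw [hshift]; ring

lemma pow_le_ballVol (hq : 1 < q) {n r t : ℕ} (htr : t ≤ r) (hrn : r + t ≤ n) :
    (q : ℝ) ^ (t * (n - t)) ≤ ballVol q n r t := by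
  have hterm_nonneg : ∀ d ∈ range (t + 1),
      0 ≤ (q : ℝ) ^ (d ^ 2) * gaussBinom q r d * gaussBinom q (n - r) d := fun d hd => by
    have hdt := mem_range_succ_iff.1 hd
    have := gaussBinom_nonneg hq (hdt.trans htr)
    have := gaussBinom_nonneg hq (by omega : d ≤ n - r)
    positivity
  calc (q : ℝ) ^ (t * (n - t))
        = (q : ℝ) ^ (t ^ 2) * (q : ℝ) ^ (t * (r - t)) * (q : ℝ) ^ (t * (n - r - t)) := by
        rw [← pow_add, ← pow_add, sq_add_mul_sub_add_mul_sub_eq htr hrn]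
    _ ≤ (q : ℝ) ^ (t ^ 2) * gaussBinom q r t * gaussBinom q (n - r) t := by
        gcongr
        · exact mul_nonneg (by positivity) (gaussBinom_nonneg hq htr)
        · exact pow_le_gaussBinom hq htr
        · exact pow_le_gaussBinom hq (by omega)
    _ ≤ ballVol q n r t := single_le_sum hterm_nonneg (self_mem_range_succ t)

lemma ballVol_lt (hq : 1 < q) {n r t : ℕ} (htr : t ≤ r) (hrn : r + t ≤ n) :
    ballVol q n r t < (Kq q ^ 2)⁻¹ * (q : ℝ) ^ (t * (n - t)) := by
  have hx0 : (0 : ℝ) < (q : ℝ)⁻¹ := by positivity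
  have hx1 : (q : ℝ)⁻¹ < 1 := inv_lt_one_of_one_lt₀ (by exact_mod_cast hq)
  have hK0 : 0 < Kq q := tprod_one_sub_pow_succ_pos hx0.le hx1
  have hc : 1 < (Kq q ^ 2)⁻¹ :=
    (one_lt_inv₀ (by positivity)).2 (pow_lt_one₀ hK0.le (tprod_one_sub_pow_succ_lt_one hx0 hx1)
      two_ne_zero)
  calc ballVol q n r t = ∑ d ∈ range t,
        (q : ℝ) ^ ((d + 1) ^ 2) * gaussBinom q r (d + 1) * gaussBinom q (n - r) (d + 1) + 1 := by
        simp [ballVol, sum_range_succ', gaussBinom]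
    _ ≤ ∑ d ∈ range t, (Kq q ^ 2)⁻¹ *
          ((q : ℝ) ^ ((d + 1) * (n - (d + 1))) - (q : ℝ) ^ (d * (n - d))) + 1 := by
        gcongr ∑ _ ∈ _, ?_ + 1 with d hd
        have := mem_range.1 hd
        exact ballVol_term_le hq (by omega) (by omega : r + (d + 1) ≤ n)
    _ = (Kq q ^ 2)⁻¹ * (q : ℝ) ^ (t * (n - t)) - ((Kq q ^ 2)⁻¹ - 1) := by
        rw [← mul_sum, sum_range_sub (fun d => (q : ℝ) ^ (d * (n - d)))]
        simp only [zero_mul, pow_zero]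
        ring
    _ < (Kq q ^ 2)⁻¹ * (q : ℝ) ^ (t * (n - t)) := by linarith

end BallVolume

theorem ballVol_bounds_general (q n r t : ℕ)
    (hq : 2 ≤ q)
    (hr : r ≤ n / 2) (ht : t ≤ r) :
    (q : ℝ) ^ (t * (n - t)) ≤ ballVol q n r t ∧
    ballVol q n r t < ((Kq q) ^ 2)⁻¹ * (q : ℝ) ^ (t * (n - t)) :=
  ⟨pow_le_ballVol hq ht (by omega), ballVol_lt hq ht (by omega)⟩

/-- Bounds on the volume of balls in the Grassmannian:
`q^{t(n-t)} ≤ V_C(t) < K_q^{-2} q^{t(n-t)}`. -/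
theorem ballVol_bounds (q n r t : ℕ)
    (hpp : ∃ p k : ℕ, p.Prime ∧ 0 < k ∧ q = p ^ k) (hq : 2 ≤ q)
    (hr : r ≤ n / 2) (ht : t ≤ r) :
    (q : ℝ) ^ (t * (n - t)) ≤ ballVol q n r t ∧
    ballVol q n r t < ((Kq q) ^ 2)⁻¹ * (q : ℝ) ^ (t * (n - t)) :=
  ballVol_bounds_general q n r t hq hr ht
end

section
/- Permuted liftings give covering codes: let 𝒞 ⊆ GF(q)^{r×(n-r)} be a rank-metric code with the property that every matrix in GF(q)^{r×(n-r)} is within rank distance ρ of some element of 𝒞. Then every r-dimensional subspace U of GF(q)^n can be written as the row space of a matrix π(I_r | V) for some r-subset-determined column permutation π and some V ∈ GF(q)^{r×(n-r)}, and consequently the code L(𝒞) = { row space of π_J(I_r | C) : J an r-subset of {0,…,n-1}, C ∈ 𝒞 } has injection covering radius at most ρ and cardinality at most C(n,r)·|𝒞|. -/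
/-- The row space of a matrix: the span of its rows. -/
noncomputable def rowSpace {F ι m : Type*} [Field F] (M : Matrix ι m F) :
    Submodule F (m → F) :=
  Submodule.span F (Set.range M)

/-- The rank of a matrix, as the dimension of its row space. -/
noncomputable def rk {F ι m : Type*} [Field F] (M : Matrix ι m F) : ℕ :=
  Module.finrank F (rowSpace M)

/-- The injection distance `d_I(U,V) = dim(U+V) - min(dim U, dim V)`. -/
noncomputable def dI {F W : Type*} [Field F] [AddCommGroup W] [Module F W]
    (U V : Submodule F W) : ℕ :=
  Module.finrank F ↥(U ⊔ V) - min (Module.finrank F ↥U) (Module.finrank F ↥V)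

/-- The permuted lifting `(I_r | C)` with identity columns placed in positions `J`
(in increasing order) and the columns of `C` in the remaining positions (in increasing
order): this is `π_J(I_r | C)`. -/
noncomputable def liftPerm {F : Type*} [Field F] {n r : ℕ}
    (J : {s : Finset (Fin n) // s.card = r}) (C : Matrix (Fin r) (Fin (n - r)) F) :
    Matrix (Fin r) (Fin n) F := fun i j =>
  if h : j ∈ J.1 then (if (J.1.orderIsoOfFin J.2).symm ⟨j, h⟩ = i then (1 : F) else 0)
  else C i (((J.1ᶜ).orderIsoOfFin (by simp [Finset.card_compl, J.2])).symm
    ⟨j, by simpa using h⟩)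

/-!
Every `r`-dimensional subspace is the row space of an `r × n` matrix `M` of rank `r`. Some `r`
columns of `M`, at positions `J`, form an invertible matrix `N`, and `N⁻¹ M` has the same row space
and the identity at the columns `J`, so it is `π_J(I_r | V)`. Two liftings with the same `J`
differ by a matrix whose nonzero columns are columns of `C - D`, so their injection distance is at
most `rk (C - D)`; hence covering `V` by `𝒞` covers `U` by `L(𝒞)`, which is the image of the
`C(n,r) · |𝒞|` pairs `(J, C)`.
-/

open Matrix Module

@[simp]
lemma Finset.orderEmbOfFin_orderIsoOfFin_symm {α : Type*} [LinearOrder α] (s : Finset α)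
    {k : ℕ} (h : s.card = k) (x : s) : s.orderEmbOfFin h ((s.orderIsoOfFin h).symm x) = x := by
  rw [← Finset.coe_orderIsoOfFin_apply, OrderIso.apply_symm_apply]

section RowSpace

variable {F ι m : Type*} [Field F]

lemma rk_eq_rank [Finite ι] [Fintype m] (A : Matrix ι m F) : rk A = A.rank :=
  A.rank_eq_finrank_span_row.symm

lemma rowSpace_le_sup_rowSpace_sub (A B : Matrix ι m F) :
    rowSpace A ≤ rowSpace B ⊔ rowSpace (A - B) := by
  refine Submodule.span_le.2 (Set.range_subset_iff.2 fun i => ?_)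
  rw [(congrFun (add_sub_cancel B A) i).symm]
  exact Submodule.add_mem_sup (Submodule.subset_span ⟨i, rfl⟩) (Submodule.subset_span ⟨i, rfl⟩)

lemma rowSpace_neg (A : Matrix ι m F) : rowSpace (-A) = rowSpace A := by
  rw [rowSpace, rowSpace, ← Submodule.span_neg]
  congr 1
  ext x
  simp only [Set.mem_neg]
  exact exists_congr fun i => neg_inj

lemma rowSpace_sub_comm (A B : Matrix ι m F) : rowSpace (A - B) = rowSpace (B - A) := by
  rw [← neg_sub, rowSpace_neg]

lemma finrank_sup_rowSpace_le [Finite m] (A B : Matrix ι m F) :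
    finrank F ↥(rowSpace A ⊔ rowSpace B) ≤ finrank F (rowSpace A) + rk (A - B) := by
  have hB : rowSpace B ≤ rowSpace A ⊔ rowSpace (A - B) := by
    simpa only [rowSpace_sub_comm B A] using rowSpace_le_sup_rowSpace_sub B A
  calc finrank F ↥(rowSpace A ⊔ rowSpace B)
      ≤ finrank F ↥(rowSpace A ⊔ rowSpace (A - B)) :=
        Submodule.finrank_mono (sup_le le_sup_left hB)
    _ ≤ finrank F (rowSpace A) + rk (A - B) :=
        Submodule.finrank_add_le_finrank_add_finrank _ _

lemma dI_rowSpace_le_rk_sub [Finite m] (A B : Matrix ι m F) :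
    dI (rowSpace A) (rowSpace B) ≤ rk (A - B) := by
  have hA := finrank_sup_rowSpace_le A B
  have hB := finrank_sup_rowSpace_le B A
  rw [sup_comm, rk, rowSpace_sub_comm] at hB
  unfold dI rk at *
  omega

lemma rank_le_rank_of_forall_col_mem_span [Finite ι] [Fintype m] {m' : Type*} [Fintype m']
    (A : Matrix ι m F) (B : Matrix ι m' F)
    (h : ∀ j, A.col j ∈ Submodule.span F (Set.range B.col)) : A.rank ≤ B.rank := by
  rw [rank_eq_finrank_span_cols, rank_eq_finrank_span_cols]
  exact Submodule.finrank_mono (Submodule.span_le.2 (Set.range_subset_iff.2 h))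

lemma rowSpace_mul_le [Fintype ι] {ι' : Type*} (P : Matrix ι' ι F) (M : Matrix ι m F) :
    rowSpace (P * M) ≤ rowSpace M := by
  refine Submodule.span_le.2 (Set.range_subset_iff.2 fun i => ?_)
  exact (range_vecMulLinear M).le ⟨P i, rfl⟩

lemma rowSpace_mul_of_isUnit [Fintype ι] [DecidableEq ι] {P : Matrix ι ι F} (hP : IsUnit P)
    (M : Matrix ι m F) : rowSpace (P * M) = rowSpace M := by
  refine le_antisymm (rowSpace_mul_le P M) ?_
  have := rowSpace_mul_le P⁻¹ (P * M)
  rwa [← Matrix.mul_assoc, nonsing_inv_mul _ ((isUnit_iff_isUnit_det P).1 hP), Matrix.one_mul]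
    at this

lemma exists_rowSpace_eq [Finite m] {r : ℕ} (U : Submodule F (m → F)) (hU : finrank F U = r) :
    ∃ M : Matrix (Fin r) m F, rowSpace M = U := by
  let b := Module.finBasisOfFinrankEq F U hU
  refine ⟨fun i => (b i : m → F), ?_⟩
  change Submodule.span F (Set.range (U.subtype ∘ b)) = U
  rw [Set.range_comp, ← Submodule.map_span, b.span_eq, Submodule.map_top, Submodule.range_subtype]

end RowSpace

section Lifting

variable {F : Type*} [Field F] {n r : ℕ} (J : {s : Finset (Fin n) // s.card = r})

lemma card_compl_eq_sub : (J.1ᶜ).card = n - r := by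
  simp [Finset.card_compl, J.2]

lemma col_liftPerm_sub_mem_span (C D : Matrix (Fin r) (Fin (n - r)) F) (j : Fin n) :
    (liftPerm J C - liftPerm J D).col j ∈ Submodule.span F (Set.range (C - D).col) := by
  by_cases h : j ∈ J.1
  · convert (Submodule.span F (Set.range (C - D).col)).zero_mem
    ext i
    simp [liftPerm, h]
  · refine Submodule.subset_span
      ⟨((J.1ᶜ).orderIsoOfFin (card_compl_eq_sub J)).symm ⟨j, by simpa using h⟩, ?_⟩
    ext i
    simp [liftPerm, h]

lemma rk_liftPerm_sub_le (C D : Matrix (Fin r) (Fin (n - r)) F) :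
    rk (liftPerm J C - liftPerm J D) ≤ rk (C - D) := by
  rw [rk_eq_rank, rk_eq_rank]
  exact rank_le_rank_of_forall_col_mem_span _ _ (col_liftPerm_sub_mem_span J C D)

lemma dI_liftPerm_le (C D : Matrix (Fin r) (Fin (n - r)) F) :
    dI (rowSpace (liftPerm J C)) (rowSpace (liftPerm J D)) ≤ rk (C - D) :=
  (dI_rowSpace_le_rk_sub _ _).trans (rk_liftPerm_sub_le J C D)

lemma liftPerm_submatrix_compl {A : Matrix (Fin r) (Fin n) F}
    (hA : A.submatrix id (J.1.orderEmbOfFin J.2) = 1) :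
    liftPerm J (A.submatrix id ((J.1ᶜ).orderEmbOfFin (card_compl_eq_sub J))) = A := by
  ext i j
  by_cases h : j ∈ J.1
  · have := congrFun (congrFun hA i) ((J.1.orderIsoOfFin J.2).symm ⟨j, h⟩)
    simp only [submatrix_apply, id_eq, Finset.orderEmbOfFin_orderIsoOfFin_symm, one_apply] at this
    simp [liftPerm, h, this, eq_comm]
  · simp [liftPerm, h]

lemma exists_isUnit_submatrix_of_rank_eq {M : Matrix (Fin r) (Fin n) F} (hM : M.rank = r) :
    ∃ J : {s : Finset (Fin n) // s.card = r}, IsUnit (M.submatrix id (J.1.orderEmbOfFin J.2)) := by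
  classical
  obtain ⟨b, -, -, hspan, hli⟩ := exists_linearIndepOn_extension (v := M.col)
    (linearIndepOn_empty F M.col) (Set.empty_subset Set.univ)
  have hspan_eq : Submodule.span F (M.col '' b) = Submodule.span F (Set.range M.col) :=
    le_antisymm (Submodule.span_mono (Set.image_subset_range _ _))
      (Submodule.span_le.2 (by simpa using hspan))
  have hcard : b.toFinset.card = r := by
    rw [Set.toFinset_card, linearIndependent_iff_card_eq_finrank_span.1 hli, Set.finrank,
      ← Set.image_eq_range, hspan_eq, ← rank_eq_finrank_span_cols, hM]
  refine ⟨⟨b.toFinset, hcard⟩, Matrix.linearIndependent_cols_iff_isUnit.1 ?_⟩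
  exact hli.comp (fun k => ⟨_, Set.mem_toFinset.1 (Finset.orderEmbOfFin_mem _ hcard k)⟩)
    fun k k' h => (Finset.orderEmbOfFin _ hcard).injective (by simpa using h)

theorem exists_liftPerm_eq (U : Submodule F (Fin n → F)) (hU : finrank F U = r) :
    ∃ (J : {s : Finset (Fin n) // s.card = r}) (V : Matrix (Fin r) (Fin (n - r)) F),
      U = rowSpace (liftPerm J V) := by
  obtain ⟨M, rfl⟩ := exists_rowSpace_eq U hU
  obtain ⟨J, hJ⟩ := exists_isUnit_submatrix_of_rank_eq (M := M) (by rwa [← rk_eq_rank])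
  set N := M.submatrix id (J.1.orderEmbOfFin J.2)
  have hN : (N⁻¹ * M).submatrix id (J.1.orderEmbOfFin J.2) = 1 := by
    rw [submatrix_mul _ _ id id _ Function.bijective_id, submatrix_id_id,
      nonsing_inv_mul _ ((isUnit_iff_isUnit_det N).1 hJ)]
  refine ⟨J, (N⁻¹ * M).submatrix id ((J.1ᶜ).orderEmbOfFin (card_compl_eq_sub J)), ?_⟩
  rw [liftPerm_submatrix_compl J hN, rowSpace_mul_of_isUnit (isUnit_nonsing_inv_iff.2 hJ)]

def permutedLiftingCode (𝒞 : Finset (Matrix (Fin r) (Fin (n - r)) F)) :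
    Set (Submodule F (Fin n → F)) :=
  {W | ∃ (J : {s : Finset (Fin n) // s.card = r}) (C : Matrix (Fin r) (Fin (n - r)) F),
    C ∈ 𝒞 ∧ W = rowSpace (liftPerm J C)}

lemma card_permutedLiftingCode_le (𝒞 : Finset (Matrix (Fin r) (Fin (n - r)) F)) :
    Nat.card (permutedLiftingCode 𝒞) ≤ n.choose r * 𝒞.card := by
  have hrange : permutedLiftingCode 𝒞 =
      Set.range fun p : {s : Finset (Fin n) // s.card = r} × 𝒞 =>
        rowSpace (liftPerm p.1 p.2.1) := by
    ext W
    constructor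
    · rintro ⟨J, C, hC, rfl⟩
      exact ⟨(J, ⟨C, hC⟩), rfl⟩
    · rintro ⟨⟨J, C, hC⟩, rfl⟩
      exact ⟨J, C, hC, rfl⟩
  rw [hrange]
  refine (Finite.card_range_le _).trans_eq ?_
  simp [Fintype.card_finset_len]

end Lifting

theorem permuted_lifting_covering_general (n r ρ : ℕ) (F : Type*) [Field F]
    (𝒞 : Finset (Matrix (Fin r) (Fin (n - r)) F))
    (hcov : ∀ V : Matrix (Fin r) (Fin (n - r)) F, ∃ C ∈ 𝒞, rk (V - C) ≤ ρ) :
    (∀ U : Submodule F (Fin n → F), Module.finrank F ↥U = r →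
      ∃ (J : {s : Finset (Fin n) // s.card = r}) (V : Matrix (Fin r) (Fin (n - r)) F),
        U = rowSpace (liftPerm J V)) ∧
    (∀ U : Submodule F (Fin n → F), Module.finrank F ↥U = r →
      ∃ (J : {s : Finset (Fin n) // s.card = r}) (C : Matrix (Fin r) (Fin (n - r)) F),
        C ∈ 𝒞 ∧ dI U (rowSpace (liftPerm J C)) ≤ ρ) ∧
    Nat.card {W : Submodule F (Fin n → F) |
        ∃ (J : {s : Finset (Fin n) // s.card = r}) (C : Matrix (Fin r) (Fin (n - r)) F),
          C ∈ 𝒞 ∧ W = rowSpace (liftPerm J C)}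
      ≤ n.choose r * 𝒞.card := by
  refine ⟨exists_liftPerm_eq, fun U hU => ?_, card_permutedLiftingCode_le 𝒞⟩
  obtain ⟨J, V, rfl⟩ := exists_liftPerm_eq U hU
  obtain ⟨C, hC, hVC⟩ := hcov V
  exact ⟨J, C, hC, (dI_liftPerm_le J V C).trans hVC⟩

/-- Permuted liftings of a rank-metric covering code form a covering
constant-dimension code: every `r`-dimensional subspace is a permuted lifting, the code
`L(𝒞)` has injection covering radius at most `ρ`, and `|L(𝒞)| ≤ C(n,r)·|𝒞|`. -/
theorem permuted_lifting_covering (q n r ρ : ℕ) (F : Type*) [Field F] [Fintype F]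
    (hq : Fintype.card F = q) (hr : r ≤ n)
    (𝒞 : Finset (Matrix (Fin r) (Fin (n - r)) F))
    (hcov : ∀ V : Matrix (Fin r) (Fin (n - r)) F, ∃ C ∈ 𝒞, rk (V - C) ≤ ρ) :
    (∀ U : Submodule F (Fin n → F), Module.finrank F ↥U = r →
      ∃ (J : {s : Finset (Fin n) // s.card = r}) (V : Matrix (Fin r) (Fin (n - r)) F),
        U = rowSpace (liftPerm J V)) ∧
    (∀ U : Submodule F (Fin n → F), Module.finrank F ↥U = r →
      ∃ (J : {s : Finset (Fin n) // s.card = r}) (C : Matrix (Fin r) (Fin (n - r)) F),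
        C ∈ 𝒞 ∧ dI U (rowSpace (liftPerm J C)) ≤ ρ) ∧
    Nat.card {W : Submodule F (Fin n → F) |
        ∃ (J : {s : Finset (Fin n) // s.card = r}) (C : Matrix (Fin r) (Fin (n - r)) F),
          C ∈ 𝒞 ∧ W = rowSpace (liftPerm J C)}
      ≤ n.choose r * 𝒞.card :=
  permuted_lifting_covering_general n r ρ F 𝒞 hcov
end
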